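/- For each l ≥ 1 there is a constant c₁ > 0 such that for all x ∈ ℝ^d and λ ≥ 0, -∂θ^{(l)}/∂λ (x,λ) ≥ c₁ · (1 + log(1+|x|²))^{1/2} · θ^{(l)}(x,λ). -/

import Mathlib

/-- The iterated-logarithm hierarchy: `iterLog α 0 = α`,
`iterLog α (l+1) = log (e + iterLog α l)`. -/
noncomputable def iterLog (α : ℝ → ℝ) : ℕ → ℝ → ℝ
  | 0 => α
  | l + 1 => fun x => Real.log (Real.exp 1 + iterLog α l x)

/-- The modified `θ`-function
`θ^{(l)}(x,λ) = exp[-(λ/α_l(λ)^{1/2})·(1+λ²+log(1+|x|²)·α_l(√(1+|x|²)))^{1/2}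
                 - log(1+|x|²)·α_l(√(1+|x|²))]`. -/
noncomputable def theta (α : ℝ → ℝ) (l : ℕ) {d : ℕ}
    (x : EuclideanSpace ℝ (Fin d)) (lam : ℝ) : ℝ :=
  Real.exp (-(lam / Real.sqrt (iterLog α l lam)) *
      Real.sqrt (1 + lam ^ 2 +
        Real.log (1 + ‖x‖ ^ 2) * iterLog α l (Real.sqrt (1 + ‖x‖ ^ 2))) -
    Real.log (1 + ‖x‖ ^ 2) * iterLog α l (Real.sqrt (1 + ‖x‖ ^ 2)))

/-! Write `θ = exp (-(λ / √D) · S - P)` with `D = α_l(λ)`, `S = √(1 + λ² + P)` and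
`P = log(1+|x|²) · α_l(√(1+|x|²))`. Monotonicity of `λ / α_l` gives `λ · α_l'(λ) ≤ α_l(λ)`, hence
`(λ / √D)' ≥ 1 / (2√D)` and `-∂_λ θ ≥ S / (2√D) · θ`. It remains to bound
`(1 + log(1+|x|²)) · α_l(λ)` by a multiple of `S²`: for `λ ≤ √(1+|x|²)` through monotonicity of
`α_l` (the case `log(1+|x|²) ≤ 1` separately), and for larger `λ` through the linear growth
`α_l(λ) ≤ α_l(1) · λ`, again a consequence of the monotonicity of `λ / α_l`. -/
open Real Set

lemma one_le_iterLog {α : ℝ → ℝ} (hmono : MonotoneOn α (Ici 0)) (h0 : 1 ≤ α 0) :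
    ∀ (l : ℕ) {t : ℝ}, 0 ≤ t → 1 ≤ iterLog α l t
  | 0, t, ht => h0.trans (hmono self_mem_Ici ht ht)
  | l + 1, t, ht => by
    have := one_le_iterLog hmono h0 l ht
    show 1 ≤ log (exp 1 + iterLog α l t)
    exact (log_exp 1).symm.le.trans (log_le_log (exp_pos 1) (by linarith))

lemma monotoneOn_iterLog {α : ℝ → ℝ} (hmono : MonotoneOn α (Ici 0)) (h0 : 1 ≤ α 0) :
    ∀ l : ℕ, MonotoneOn (iterLog α l) (Ici 0)
  | 0 => hmono
  | l + 1 => fun s hs t ht hst => by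
    have := one_le_iterLog hmono h0 l hs
    have := monotoneOn_iterLog hmono h0 l hs ht hst
    exact log_le_log (by positivity) (by linarith)

lemma differentiableAt_iterLog {α : ℝ → ℝ} (hd : Differentiable ℝ α)
    (hmono : MonotoneOn α (Ici 0)) (h0 : 1 ≤ α 0) :
    ∀ (l : ℕ) {t : ℝ}, 0 ≤ t → DifferentiableAt ℝ (iterLog α l) t
  | 0, t, _ => hd t
  | l + 1, t, ht => by
    have := one_le_iterLog hmono h0 l ht
    exact ((differentiableAt_iterLog hd hmono h0 l ht).const_add _).log (by positivity)

lemma mul_deriv_le_of_monotoneOn_div {f : ℝ → ℝ} {f' t : ℝ}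
    (hmono : MonotoneOn (fun s => s / f s) (Ioi 0)) (hf : HasDerivAt f f' t) (ht : 0 < t)
    (hft : f t ≠ 0) : t * f' ≤ f t := by
  have hdiv : HasDerivAt (fun s => s / f s) ((1 * f t - t * f') / f t ^ 2) t :=
    (hasDerivAt_id t).div hf hft
  have hnonneg : 0 ≤ (1 * f t - t * f') / f t ^ 2 := by
    rw [← hdiv.deriv, ← derivWithin_of_isOpen isOpen_Ioi ht]
    exact hmono.derivWithin_nonneg
  rw [le_div_iff₀ (by positivity), zero_mul] at hnonneg
  linarith

lemma le_mul_of_monotoneOn_div {f : ℝ → ℝ} {t : ℝ}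
    (hmono : MonotoneOn (fun s => s / f s) (Ioi 0)) (h1 : 0 < f 1) (ht : 1 ≤ t)
    (hft : 0 < f t) : f t ≤ f 1 * t := by
  have := hmono (mem_Ioi.2 one_pos) (mem_Ioi.2 (one_pos.trans_le ht)) ht
  rw [div_le_div_iff₀ h1 hft] at this
  linarith

lemma exists_one_add_log_mul_le {f : ℝ → ℝ} (hmono : MonotoneOn f (Ici 0))
    (hone : ∀ t, 0 ≤ t → 1 ≤ f t) (hratio : MonotoneOn (fun s => s / f s) (Ioi 0)) :
    ∃ C > 0, ∀ s : ℝ, 1 ≤ s → ∀ lam : ℝ, 0 ≤ lam →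
      (1 + log s) * f lam ≤ C * (1 + lam ^ 2 + log s * f √s) := by
  set B₀ := f √(exp 1)
  have h1e : (1 : ℝ) ≤ √(exp 1) := one_le_sqrt.2 (one_le_exp zero_le_one)
  have hf1 : f 1 ≤ B₀ := hmono (mem_Ici.2 zero_le_one) (mem_Ici.2 (zero_le_one.trans h1e)) h1e
  have hB₀ : 1 ≤ B₀ := hone _ (zero_le_one.trans h1e)
  refine ⟨3 * B₀, by positivity, fun s hs lam hlam => ?_⟩
  have hA : 0 ≤ log s := log_nonneg hs
  have hr : 1 ≤ √s := one_le_sqrt.2 hs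
  have hB : 1 ≤ f √s := hone _ (zero_le_one.trans hr)
  have hAB : 0 ≤ log s * f √s := by positivity
  rcases le_total lam √s with hle | hle
  · have hD : f lam ≤ f √s := hmono hlam (zero_le_one.trans hr) hle
    rcases le_total 1 (log s) with hA1 | hA1
    · nlinarith
    · have hse : √s ≤ √(exp 1) := sqrt_le_sqrt ((log_le_iff_le_exp (by positivity)).1 hA1)
      have : f √s ≤ B₀ := hmono (zero_le_one.trans hr) (zero_le_one.trans h1e) hse
      nlinarith
  · have hlam1 : 1 ≤ lam := hr.trans hle
    have hA2 : log s ≤ 2 * lam := by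
      have : log s = 2 * log √s := by rw [log_sqrt (by positivity)]; ring
      have := log_le_log (by positivity) hle
      linarith [log_le_self (zero_le_one.trans hlam1)]
    have hlin := le_mul_of_monotoneOn_div hratio (by linarith [hone _ zero_le_one]) hlam1
      (by linarith [hone _ hlam])
    calc (1 + log s) * f lam ≤ (1 + 2 * lam) * (B₀ * lam) := by
          gcongr
          · linarith [hone _ hlam]
          · nlinarith
      _ ≤ 3 * B₀ * lam ^ 2 := by
          nlinarith [mul_nonneg (zero_le_one.trans hB₀) (mul_nonneg hlam (sub_nonneg.2 hlam1))]
      _ ≤ 3 * B₀ * (1 + lam ^ 2 + log s * f √s) := by gcongr; linarith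

lemma le_neg_deriv_exp_neg_div_sqrt_mul_sqrt {D : ℝ → ℝ} {D' lam P : ℝ}
    (hD : HasDerivAt D D' lam) (hpos : 0 < D lam) (hP : 0 ≤ P) (hmul : lam * D' ≤ D lam) :
    √(1 + lam ^ 2 + P) / (2 * √(D lam)) *
        exp (-(lam / √(D lam)) * √(1 + lam ^ 2 + P) - P) ≤
      -deriv (fun t => exp (-(t / √(D t)) * √(1 + t ^ 2 + P) - P)) lam := by
  set sD := √(D lam)
  set S := √(1 + lam ^ 2 + P)
  have hsD : 0 < sD := sqrt_pos.2 hpos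
  have hsD2 : sD ^ 2 = D lam := sq_sqrt hpos.le
  have hQ : 0 < 1 + lam ^ 2 + P := by positivity
  have hquot : HasDerivAt (fun t => t / √(D t)) ((1 * sD - lam * (D' / (2 * sD))) / sD ^ 2) lam :=
    (hasDerivAt_id lam).div (hD.sqrt hpos.ne') hsD.ne'
  have hroot : HasDerivAt (fun t => √(1 + t ^ 2 + P)) ((2 * lam) / (2 * S)) lam := by
    have := (((hasDerivAt_pow 2 lam).const_add 1).add_const P).sqrt hQ.ne'
    simpa using this
  set G := (1 * sD - lam * (D' / (2 * sD))) / sD ^ 2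
  have hderiv : HasDerivAt (fun t => exp (-(t / √(D t)) * √(1 + t ^ 2 + P) - P))
      (exp (-(lam / sD) * S - P) * (-G * S + -(lam / sD) * (2 * lam / (2 * S)))) lam :=
    ((hquot.neg.mul hroot).sub_const P).exp
  rw [hderiv.deriv]
  have hG : 1 / (2 * sD) ≤ G := by
    rw [div_le_div_iff₀ (by positivity) (by positivity)]
    have : lam * (D' / (2 * sD)) ≤ sD / 2 := by
      rw [mul_div_assoc', div_le_div_iff₀ (by positivity) two_pos]
      nlinarith
    nlinarith
  have hsec : 0 ≤ lam / sD * (2 * lam / (2 * S)) := by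
    rw [div_mul_div_comm]; exact div_nonneg (by nlinarith) (by positivity)
  calc S / (2 * sD) * exp (-(lam / sD) * S - P)
      ≤ (G * S + lam / sD * (2 * lam / (2 * S))) * exp (-(lam / sD) * S - P) := by
        gcongr
        calc S / (2 * sD) = 1 / (2 * sD) * S := by ring
          _ ≤ G * S := by gcongr
          _ ≤ _ := le_add_of_nonneg_right hsec
    _ = _ := by ring

theorem stmt_7_general (d : ℕ) (α : ℝ → ℝ)
    (hd1 : Differentiable ℝ α)
    (hmono : MonotoneOn α (Set.Ici 0))
    (h0 : 1 ≤ α 0)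
    (hratio : ∀ l : ℕ, MonotoneOn (fun lam => lam / iterLog α l lam) (Set.Ioi 0)) :
    ∀ l : ℕ, 1 ≤ l → ∃ c₁ > (0:ℝ),
      ∀ (x : EuclideanSpace ℝ (Fin d)) (lam : ℝ), 0 ≤ lam →
        c₁ * Real.sqrt (1 + Real.log (1 + ‖x‖ ^ 2)) * theta α l x lam ≤
          -deriv (fun t => theta α l x t) lam := by
  intro l _
  have hone : ∀ t, 0 ≤ t → 1 ≤ iterLog α l t := fun _ => one_le_iterLog hmono h0 l
  obtain ⟨C, hC, hgrowth⟩ :=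
    exists_one_add_log_mul_le (monotoneOn_iterLog hmono h0 l) hone (hratio l)
  refine ⟨1 / (2 * √C), by positivity, fun x lam hlam => ?_⟩
  set s := 1 + ‖x‖ ^ 2
  have hs : 1 ≤ s := le_add_of_nonneg_right (by positivity)
  set D := iterLog α l
  have hD : HasDerivAt D (deriv D lam) lam :=
    (differentiableAt_iterLog hd1 hmono h0 l hlam).hasDerivAt
  have hDpos : 0 < D lam := zero_lt_one.trans_le (hone _ hlam)
  have hmul : lam * deriv D lam ≤ D lam := by
    rcases hlam.eq_or_lt with rfl | hlam
    · simpa using hDpos.le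
    · exact mul_deriv_le_of_monotoneOn_div (hratio l) hD hlam hDpos.ne'
  have hP : 0 ≤ log s * D √s :=
    mul_nonneg (log_nonneg hs) (zero_le_one.trans (hone _ (sqrt_nonneg s)))
  refine le_trans (mul_le_mul_of_nonneg_right ?_ (exp_pos _).le)
    (le_neg_deriv_exp_neg_div_sqrt_mul_sqrt hD hDpos hP hmul)
  have hroots : √(1 + log s) * √(D lam) ≤ √C * √(1 + lam ^ 2 + log s * D √s) := by
    rw [← sqrt_mul (by linarith [log_nonneg hs]), ← sqrt_mul hC.le]
    exact sqrt_le_sqrt (hgrowth s hs lam hlam)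
  rw [one_div_mul_eq_div, div_le_div_iff₀ (by positivity) (by positivity)]
  linarith

/-- Lemma A.1'(a): lower bound for `-∂θ^{(l)}/∂λ`. -/
theorem stmt_7 (d : ℕ) (α : ℝ → ℝ)
    (hd1 : Differentiable ℝ α)
    (hmono : MonotoneOn α (Set.Ici 0))
    (hconc : ConcaveOn ℝ (Set.Ici 0) α)
    (h0 : 1 ≤ α 0)
    (htend : Filter.Tendsto α Filter.atTop Filter.atTop)
    (hder : ∀ x : ℝ, 0 ≤ x → deriv α x ≤ α x / (1 + x))
    (hratio : ∀ l : ℕ, MonotoneOn (fun lam => lam / iterLog α l lam) (Set.Ioi 0)) :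
    ∀ l : ℕ, 1 ≤ l → ∃ c₁ > (0:ℝ),
      ∀ (x : EuclideanSpace ℝ (Fin d)) (lam : ℝ), 0 ≤ lam →
        c₁ * Real.sqrt (1 + Real.log (1 + ‖x‖ ^ 2)) * theta α l x lam ≤
          -deriv (fun t => theta α l x t) lam :=
  stmt_7_general d α hd1 hmono h0 hratio
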